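/- arXiv:2007.12378 — 3 statements merged into one kernel-verified Lean document; each statement's English description precedes it below -/
import Mathlib

section
/- Let ℱ be a random c.d.f. (a measurable map from a probability space Ω to the Skorohod space 𝒟 of distribution functions) such that (ω,v) ↦ ℱ⁻(ω,v) is jointly measurable, and let c be a positive contrast function. If for each v ∈ (0,1) there is a unique minimizer s*(v) of s ↦ E[c(ℱ⁻(v), s)], and a unique G* ∈ 𝒟 minimizing G ↦ E[W_c(ℱ, G)], then (G*)⁻(v) = s*(v) for almost every v ∈ (0,1). -/
open MeasureTheory
open scoped ENNReal

/-- A cumulative distribution function on `ℝ`. -/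
structure CDF where
  toFun : ℝ → ℝ
  mono : Monotone toFun
  right_continuous : ∀ x, ContinuousWithinAt toFun (Set.Ici x) x
  tendsto_atBot : Filter.Tendsto toFun Filter.atBot (nhds 0)
  tendsto_atTop : Filter.Tendsto toFun Filter.atTop (nhds 1)

/-- Generalized inverse (quantile function) of a c.d.f. -/
noncomputable def CDF.inv (F : CDF) (v : ℝ) : ℝ := sInf {x : ℝ | v ≤ F.toFun x}

lemma CDF.inv_mono (F : CDF) {u v : ℝ} (hu : 0 < u) (hv : v < 1) (huv : u ≤ v) :
    F.inv u ≤ F.inv v := by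
  have hne : {x : ℝ | v ≤ F.toFun x}.Nonempty := by
    obtain ⟨x1, hx1⟩ := (F.tendsto_atTop.eventually_const_lt hv).exists
    exact ⟨x1, hx1.le⟩
  have hbdd : BddBelow {x : ℝ | u ≤ F.toFun x} := by
    obtain ⟨x0, hx0⟩ := (F.tendsto_atBot.eventually_lt_const hu).exists
    refine ⟨x0, fun x hx => ?_⟩
    by_contra h
    push_neg at h
    exact absurd (le_trans hx (F.mono h.le)) (not_le.2 hx0)
  exact csInf_le_csInf hbdd hne fun x hx => le_trans huv hx

section auxCDF

variable (s : ℝ → ℝ)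

/-- Candidate c.d.f. whose quantile function is (a.e.) `s`. -/
noncomputable def auxGfun (x : ℝ) : ℝ :=
  sSup ({0} ∪ {v ∈ Set.Ioo (0:ℝ) 1 | s v ≤ x})

lemma auxGset_nonempty (x : ℝ) :
    ({0} ∪ {v ∈ Set.Ioo (0:ℝ) 1 | s v ≤ x}).Nonempty := ⟨0, Or.inl rfl⟩

lemma auxGset_bdd (x : ℝ) :
    BddAbove ({0} ∪ {v ∈ Set.Ioo (0:ℝ) 1 | s v ≤ x}) := by
  refine ⟨1, ?_⟩
  rintro v (rfl | hv)
  · norm_num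
  · exact hv.1.2.le

lemma auxGfun_nonneg (x : ℝ) : 0 ≤ auxGfun s x :=
  le_csSup (auxGset_bdd s x) (Or.inl rfl)

lemma auxGfun_le_one (x : ℝ) : auxGfun s x ≤ 1 := by
  refine csSup_le (auxGset_nonempty s x) ?_
  rintro v (rfl | hv)
  · norm_num
  · exact hv.1.2.le

lemma auxGfun_mono : Monotone (auxGfun s) := by
  intro x y hxy
  refine csSup_le_csSup (auxGset_bdd s y) (auxGset_nonempty s x) ?_
  rintro v (rfl | hv)
  · exact Or.inl rfl
  · exact Or.inr ⟨hv.1, hv.2.trans hxy⟩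

variable (hmono : ∀ ⦃u v : ℝ⦄, u ∈ Set.Ioo (0:ℝ) 1 → v ∈ Set.Ioo (0:ℝ) 1 → u ≤ v → s u ≤ s v)
include hmono

lemma le_auxGfun_iff {v : ℝ} (hv : v ∈ Set.Ioo (0:ℝ) 1) (x : ℝ) :
    v ≤ auxGfun s x ↔ ∀ u ∈ Set.Ioo (0:ℝ) v, s u ≤ x := by
  constructor
  · intro h u hu
    have hlt : u < sSup ({0} ∪ {w ∈ Set.Ioo (0:ℝ) 1 | s w ≤ x}) := lt_of_lt_of_le hu.2 h
    obtain ⟨w, hw, huw⟩ := exists_lt_of_lt_csSup (auxGset_nonempty s x) hlt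
    rcases hw with rfl | hw
    · exact absurd hu.1 (not_lt.2 huw.le)
    · exact le_trans (hmono ⟨hu.1, hu.2.trans hv.2⟩ hw.1 huw.le) hw.2
  · intro h
    refine le_of_forall_lt fun a ha => ?_
    rcases lt_or_ge a 0 with ha0 | ha0
    · exact lt_of_lt_of_le ha0 (auxGfun_nonneg s x)
    · set u : ℝ := (max a 0 + v) / 2 with hu
      have h1 := le_max_left a 0
      have h2 := le_max_right a 0
      have hav : max a 0 < v := max_lt ha hv.1
      have hau : a < u := by simp only [hu]; linarith
      have huv : u < v := by simp only [hu]; linarith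
      have hu0 : 0 < u := by simp only [hu]; linarith
      have : u ≤ auxGfun s x :=
        le_csSup (auxGset_bdd s x) (Or.inr ⟨⟨hu0, huv.trans hv.2⟩, h u ⟨hu0, huv⟩⟩)
      exact lt_of_lt_of_le hau this

lemma auxGfun_right_continuous (x : ℝ) :
    ContinuousWithinAt (auxGfun s) (Set.Ici x) x := by
  rw [Metric.continuousWithinAt_iff]
  intro ε hε
  by_contra hcon
  push_neg at hcon
  set u : ℝ := auxGfun s x + ε / 2 with hu
  have hu0 : 0 < u := lt_of_lt_of_le (by linarith) (by simp only [hu]; nlinarith [auxGfun_nonneg s x])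
  -- for every n, find w_n ∈ (0,1), u < w_n, s w_n ≤ x + 1/(n+1)
  have hex : ∀ n : ℕ, ∃ w, w ∈ Set.Ioo (0:ℝ) 1 ∧ s w ≤ x + 1 / (n + 1) ∧ u < w := by
    intro n
    have hpos : (0:ℝ) < 1 / (n + 1) := by positivity
    obtain ⟨z, hz, hzd, hzc⟩ := hcon (1 / (n + 1)) hpos
    have hGz : auxGfun s x ≤ auxGfun s z := auxGfun_mono s hz
    have hGz' : auxGfun s x + ε ≤ auxGfun s z := by
      rw [Real.dist_eq, abs_of_nonneg (by linarith)] at hzc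
      linarith
    have huz : u < auxGfun s z := by simp only [hu]; linarith
    obtain ⟨w, hw, huw⟩ := exists_lt_of_lt_csSup (auxGset_nonempty s z) huz
    rcases hw with rfl | hw
    · exact absurd hu0 (not_lt.2 huw.le)
    · refine ⟨w, hw.1, le_trans hw.2 ?_, huw⟩
      rw [Real.dist_eq, abs_lt] at hzd
      linarith
  have hu1 : u < 1 := lt_trans (hex 0).choose_spec.2.2 (hex 0).choose_spec.1.2
  have hsu : s u ≤ x := by
    by_contra h
    push_neg at h
    obtain ⟨n, hn⟩ := exists_nat_one_div_lt (sub_pos.2 h)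
    obtain ⟨w, hw, hsw, huw⟩ := hex n
    have : s u ≤ s w := hmono ⟨hu0, hu1⟩ hw huw.le
    have hn' : (1:ℝ) / (n + 1) < s u - x := hn
    linarith
  have : u ≤ auxGfun s x := le_csSup (auxGset_bdd s x) (Or.inr ⟨⟨hu0, hu1⟩, hsu⟩)
  simp only [hu] at this
  linarith

lemma auxGfun_tendsto_atBot : Filter.Tendsto (auxGfun s) Filter.atBot (nhds 0) := by
  rw [tendsto_order]
  constructor
  · intro a ha
    exact Filter.Eventually.of_forall fun x => lt_of_lt_of_le ha (auxGfun_nonneg s x)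
  · intro b hb
    set ε : ℝ := min b 1 / 2 with hε
    have hε0 : 0 < ε := by simp only [hε]; positivity
    have hε1 : ε < 1 := by
      have : min b 1 ≤ 1 := min_le_right _ _
      simp only [hε]; linarith
    have hεb : ε < b := by
      have : min b 1 ≤ b := min_le_left _ _
      simp only [hε]; linarith
    have : ∀ᶠ x in Filter.atBot, x < s ε := Filter.eventually_lt_atBot (s ε)
    refine this.mono fun x hx => ?_
    have hub : auxGfun s x ≤ ε := by
      refine csSup_le (auxGset_nonempty s x) ?_
      rintro w (rfl | hw)
      · exact hε0.le
      · by_contra hcon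
        push_neg at hcon
        have : s ε ≤ s w := hmono ⟨hε0, hε1⟩ hw.1 hcon.le
        linarith [hw.2]
    linarith

lemma auxGfun_tendsto_atTop : Filter.Tendsto (auxGfun s) Filter.atTop (nhds 1) := by
  rw [tendsto_order]
  constructor
  · intro a ha
    set v : ℝ := (max a 0 + 1) / 2 with hv
    have h1 := le_max_left a 0
    have h2 := le_max_right a 0
    have hma : max a 0 < 1 := max_lt ha one_pos
    have hav : a < v := by simp only [hv]; linarith
    have hv0 : 0 < v := by simp only [hv]; linarith
    have hv1 : v < 1 := by simp only [hv]; linarith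
    have : ∀ᶠ x in Filter.atTop, s v < x := Filter.eventually_gt_atTop (s v)
    refine this.mono fun x hx => ?_
    have : v ≤ auxGfun s x := le_csSup (auxGset_bdd s x) (Or.inr ⟨⟨hv0, hv1⟩, hx.le⟩)
    linarith
  · intro b hb
    exact Filter.Eventually.of_forall fun x => lt_of_le_of_lt (auxGfun_le_one s x) hb

/-- The candidate c.d.f. -/
noncomputable def auxCDF : CDF where
  toFun := auxGfun s
  mono := auxGfun_mono s
  right_continuous := auxGfun_right_continuous s hmono
  tendsto_atBot := auxGfun_tendsto_atBot s hmono
  tendsto_atTop := auxGfun_tendsto_atTop s hmono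

lemma auxCDF_inv {v : ℝ} (hv : v ∈ Set.Ioo (0:ℝ) 1) :
    (auxCDF s hmono).inv v = sSup (s '' Set.Ioo 0 v) := by
  have hne : (s '' Set.Ioo 0 v).Nonempty :=
    ⟨s (v / 2), ⟨v / 2, ⟨by linarith [hv.1], by linarith [hv.1]⟩, rfl⟩⟩
  have hbd : BddAbove (s '' Set.Ioo 0 v) := by
    refine ⟨s v, ?_⟩
    rintro y ⟨w, hw, rfl⟩
    exact hmono ⟨hw.1, hw.2.trans hv.2⟩ hv hw.2.le
  have hset : {x : ℝ | v ≤ (auxCDF s hmono).toFun x} = Set.Ici (sSup (s '' Set.Ioo 0 v)) := by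
    ext x
    simp only [Set.mem_setOf_eq, Set.mem_Ici, auxCDF]
    rw [le_auxGfun_iff s hmono hv x, csSup_le_iff hbd hne]
    constructor
    · intro h y ⟨w, hw, hwy⟩
      exact hwy ▸ h w hw
    · intro h u hu
      exact h (s u) ⟨u, hu, rfl⟩
  rw [CDF.inv, hset, csInf_Ici]

end auxCDF

/-- If `s*(v)` is the unique minimizer of `s ↦ E[c(ℱ⁻(v), s)]` for each `v ∈ (0,1)` and
`G*` is the unique minimizer of `G ↦ E[W_c(ℱ, G)]`, where
`W_c(F,G) = ∫₀¹ c(F⁻(v), G⁻(v)) dv`, then `(G*)⁻(v) = s*(v)` for a.e. `v ∈ (0,1)`. -/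
theorem frechet_feature_quantile
    {Ω : Type*} [MeasurableSpace Ω] (μ : Measure Ω) [IsProbabilityMeasure μ]
    (c : ℝ → ℝ → ℝ) (hc_pos : ∀ x y, 0 ≤ c x y)
    (hc_contrast : ∀ x x' y y' : ℝ, x ≤ x' → y ≤ y' →
      c x' y' - c x' y - c x y' + c x y ≤ 0)
    (ℱ : Ω → CDF)
    (hmeas : Measurable fun p : Ω × ℝ => (ℱ p.1).inv p.2)
    (hint : ∀ G : CDF,
      Integrable (fun p : Ω × ℝ => c ((ℱ p.1).inv p.2) (G.inv p.2))
        (μ.prod (volume.restrict (Set.Ioo (0 : ℝ) 1))))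
    (hint' : ∀ v ∈ Set.Ioo (0 : ℝ) 1, ∀ s : ℝ,
      Integrable (fun ω => c ((ℱ ω).inv v) s) μ)
    (sStar : ℝ → ℝ)
    (hs : ∀ v ∈ Set.Ioo (0 : ℝ) 1, ∀ s : ℝ, s ≠ sStar v →
      ∫ ω, c ((ℱ ω).inv v) (sStar v) ∂μ < ∫ ω, c ((ℱ ω).inv v) s ∂μ)
    (Gstar : CDF)
    (hG : ∀ G : CDF, G ≠ Gstar →
      ∫ ω, (∫ v in Set.Ioo (0 : ℝ) 1, c ((ℱ ω).inv v) (Gstar.inv v)) ∂μ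
        < ∫ ω, (∫ v in Set.Ioo (0 : ℝ) 1, c ((ℱ ω).inv v) (G.inv v)) ∂μ) :
    ∀ᵐ v ∂(volume.restrict (Set.Ioo (0 : ℝ) 1)), Gstar.inv v = sStar v := by
  -- Step 1: sStar is monotone on (0,1)
  have hsmono : ∀ ⦃u v : ℝ⦄, u ∈ Set.Ioo (0:ℝ) 1 → v ∈ Set.Ioo (0:ℝ) 1 → u ≤ v →
      sStar u ≤ sStar v := by
    intro u v hu hv huv
    by_contra hlt
    push_neg at hlt
    have key : ∀ ω, c ((ℱ ω).inv v) (sStar u) - c ((ℱ ω).inv v) (sStar v)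
        ≤ c ((ℱ ω).inv u) (sStar u) - c ((ℱ ω).inv u) (sStar v) := by
      intro ω
      have hxq : (ℱ ω).inv u ≤ (ℱ ω).inv v := (ℱ ω).inv_mono hu.1 hv.2 huv
      have := hc_contrast ((ℱ ω).inv u) ((ℱ ω).inv v) (sStar v) (sStar u) hxq hlt.le
      linarith
    have h1 := hs u hu (sStar v) (ne_of_lt hlt)
    have h2 := hs v hv (sStar u) (ne_of_gt hlt)
    have i1 := hint' v hv (sStar u)
    have i2 := hint' v hv (sStar v)
    have i3 := hint' u hu (sStar u)
    have i4 := hint' u hu (sStar v)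
    have hint_ineq := integral_mono (i1.sub i2) (i3.sub i4) key
    simp only [Pi.sub_apply] at hint_ineq
    rw [integral_sub i1 i2, integral_sub i3 i4] at hint_ineq
    linarith
  -- Step 2: bad set of discontinuity points is countable
  have hbdd : ∀ v ∈ Set.Ioo (0:ℝ) 1, BddAbove (sStar '' Set.Ioo 0 v) := by
    intro v hv
    refine ⟨sStar v, ?_⟩
    rintro y ⟨w, hw, rfl⟩
    exact hsmono ⟨hw.1, hw.2.trans hv.2⟩ hv hw.2.le
  have hLle : ∀ v ∈ Set.Ioo (0:ℝ) 1, sSup (sStar '' Set.Ioo 0 v) ≤ sStar v := by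
    intro v hv
    refine csSup_le ⟨sStar (v / 2), ⟨v / 2, ⟨by linarith [hv.1], by linarith [hv.1]⟩, rfl⟩⟩ ?_
    rintro y ⟨w, hw, rfl⟩
    exact hsmono ⟨hw.1, hw.2.trans hv.2⟩ hv hw.2.le
  set bad : Set ℝ :=
    {v | v ∈ Set.Ioo (0:ℝ) 1 ∧ sSup (sStar '' Set.Ioo 0 v) < sStar v} with hbaddef
  have hbadc : bad.Countable := by
    have hsub : bad ⊆ ⋃ q : ℚ, {v | v ∈ Set.Ioo (0:ℝ) 1 ∧
        sSup (sStar '' Set.Ioo 0 v) < (q:ℝ) ∧ (q:ℝ) < sStar v} := by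
      rintro v ⟨hv, hlt⟩
      obtain ⟨q, hq1, hq2⟩ := exists_rat_btwn hlt
      exact Set.mem_iUnion.2 ⟨q, hv, hq1, hq2⟩
    refine Set.Countable.mono hsub (Set.countable_iUnion fun q => ?_)
    refine Set.Subsingleton.countable ?_
    rintro v ⟨hv, hv1, hv2⟩ w ⟨hw, hw1, hw2⟩
    by_contra hne
    rcases lt_or_gt_of_ne hne with h | h
    · have : sStar v ≤ sSup (sStar '' Set.Ioo 0 w) :=
        le_csSup (hbdd w hw) ⟨v, ⟨hv.1, h⟩, rfl⟩
      linarith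
    · have : sStar w ≤ sSup (sStar '' Set.Ioo 0 v) :=
        le_csSup (hbdd v hv) ⟨w, ⟨hw.1, h⟩, rfl⟩
      linarith
  -- Step 3: the candidate CDF G with quantile function sStar (off bad)
  set G : CDF := auxCDF sStar hsmono with hGdef
  have hGinv : ∀ v ∈ Set.Ioo (0:ℝ) 1, v ∉ bad → G.inv v = sStar v := by
    intro v hv hb
    rw [hGdef, auxCDF_inv sStar hsmono hv]
    refine le_antisymm (hLle v hv) ?_
    by_contra hcon
    push_neg at hcon
    exact hb ⟨hv, hcon⟩
  -- Step 4: a.e. facts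
  have hae : ∀ᵐ v ∂(volume.restrict (Set.Ioo (0:ℝ) 1)),
      v ∈ Set.Ioo (0:ℝ) 1 ∧ v ∉ bad := by
    refine (ae_restrict_mem measurableSet_Ioo).and ?_
    rw [ae_iff]
    simp only [not_not]
    have := hbadc.measure_zero (volume.restrict (Set.Ioo (0:ℝ) 1))
    simpa using this
  -- Step 5: compare the two Fréchet functionals
  have hptwise : (fun v => ∫ ω, c ((ℱ ω).inv v) (G.inv v) ∂μ)
      ≤ᵐ[volume.restrict (Set.Ioo (0:ℝ) 1)]
      (fun v => ∫ ω, c ((ℱ ω).inv v) (Gstar.inv v) ∂μ) := by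
    refine hae.mono ?_
    rintro v ⟨hv, hb⟩
    simp only
    rw [hGinv v hv hb]
    rcases eq_or_ne (Gstar.inv v) (sStar v) with h | h
    · rw [h]
    · exact (hs v hv _ h).le
  have hiG : Integrable (fun v => ∫ ω, c ((ℱ ω).inv v) (G.inv v) ∂μ)
      (volume.restrict (Set.Ioo (0:ℝ) 1)) := (hint G).integral_prod_right
  have hiGs : Integrable (fun v => ∫ ω, c ((ℱ ω).inv v) (Gstar.inv v) ∂μ)
      (volume.restrict (Set.Ioo (0:ℝ) 1)) := (hint Gstar).integral_prod_right
  have hmain := integral_mono_ae hiG hiGs hptwise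
  have hswapG : ∫ ω, (∫ v in Set.Ioo (0:ℝ) 1, c ((ℱ ω).inv v) (G.inv v)) ∂μ
      = ∫ v in Set.Ioo (0:ℝ) 1, (∫ ω, c ((ℱ ω).inv v) (G.inv v) ∂μ) :=
    integral_integral_swap (hint G)
  have hswapGs : ∫ ω, (∫ v in Set.Ioo (0:ℝ) 1, c ((ℱ ω).inv v) (Gstar.inv v)) ∂μ
      = ∫ v in Set.Ioo (0:ℝ) 1, (∫ ω, c ((ℱ ω).inv v) (Gstar.inv v) ∂μ) :=
    integral_integral_swap (hint Gstar)
  have hGeq : G = Gstar := by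
    by_contra hne
    have hstrict := hG G hne
    rw [hswapG, hswapGs] at hstrict
    linarith
  refine hae.mono ?_
  rintro v ⟨hv, hb⟩
  rw [← hGeq]
  exact hGinv v hv hb
end

section
/- For any u ∈ [0,1] and α > 0, if X₂ and X₃ are independent uniform random variables on [0,1], then P(| |X₂ - u| - |X₃ - u| | ≤ α) ≤ 4α. -/
open MeasureTheory
open scoped ENNReal

/-- If `X₂, X₃` are independent uniform random variables on `[0,1]`, `u ∈ [0,1]` and
`α > 0`, then `P(||X₂ - u| - |X₃ - u|| ≤ α) ≤ 4α`. -/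
theorem prob_abs_diff_abs_uniform_le (u α : ℝ) (hu : u ∈ Set.Icc (0 : ℝ) 1)
    (hα : 0 < α) :
    ((volume.restrict (Set.Icc (0 : ℝ) 1)).prod (volume.restrict (Set.Icc (0 : ℝ) 1)))
        {p : ℝ × ℝ | abs (|p.1 - u| - |p.2 - u|) ≤ α}
      ≤ ENNReal.ofReal (4 * α) := by
  have hmeas : MeasurableSet {p : ℝ × ℝ | |(|p.1 - u| - |p.2 - u|)| ≤ α} := by
    apply measurableSet_le _ measurable_const
    fun_prop
  rw [Measure.prod_apply hmeas]
  have hslice : ∀ x : ℝ,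
      (volume.restrict (Set.Icc (0:ℝ) 1))
        (Prod.mk x ⁻¹' {p : ℝ × ℝ | |(|p.1 - u| - |p.2 - u|)| ≤ α})
      ≤ ENNReal.ofReal (4 * α) := by
    intro x
    set c := |x - u| with hc
    have hsub : (Prod.mk x ⁻¹' {p : ℝ × ℝ | |(|p.1 - u| - |p.2 - u|)| ≤ α}) ⊆
        Set.Icc (u + c - α) (u + c + α) ∪ Set.Icc (u - c - α) (u - c + α) := by
      intro y hy
      simp only [Set.mem_preimage, Set.mem_setOf_eq] at hy
      rw [abs_le] at hy
      rcases abs_cases (y - u) with ⟨h1, _⟩ | ⟨h1, _⟩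
      · left
        constructor <;> [linarith [hy.2]; linarith [hy.1]]
      · right
        constructor <;> [linarith [hy.1]; linarith [hy.2]]
    calc (volume.restrict (Set.Icc (0:ℝ) 1))
          (Prod.mk x ⁻¹' {p : ℝ × ℝ | |(|p.1 - u| - |p.2 - u|)| ≤ α})
        ≤ volume (Prod.mk x ⁻¹' {p : ℝ × ℝ | |(|p.1 - u| - |p.2 - u|)| ≤ α}) :=
          Measure.restrict_apply_le _ _
      _ ≤ volume (Set.Icc (u + c - α) (u + c + α) ∪ Set.Icc (u - c - α) (u - c + α)) :=
          measure_mono hsub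
      _ ≤ volume (Set.Icc (u + c - α) (u + c + α)) + volume (Set.Icc (u - c - α) (u - c + α)) :=
          measure_union_le _ _
      _ ≤ ENNReal.ofReal (4 * α) := by
          rw [Real.volume_Icc, Real.volume_Icc,
            ← ENNReal.ofReal_add (by linarith) (by linarith)]
          apply ENNReal.ofReal_le_ofReal
          ring_nf
          linarith
  calc ∫⁻ x, (volume.restrict (Set.Icc (0:ℝ) 1))
        (Prod.mk x ⁻¹' {p : ℝ × ℝ | |(|p.1 - u| - |p.2 - u|)| ≤ α})
        ∂(volume.restrict (Set.Icc (0:ℝ) 1))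
      ≤ ∫⁻ _, ENNReal.ofReal (4 * α) ∂(volume.restrict (Set.Icc (0:ℝ) 1)) :=
        lintegral_mono hslice
    _ = ENNReal.ofReal (4 * α) * (volume.restrict (Set.Icc (0:ℝ) 1)) Set.univ :=
        lintegral_const _
    _ ≤ ENNReal.ofReal (4 * α) := by
        rw [Measure.restrict_apply_univ, Real.volume_Icc]
        simp
end

section
/- If μ is the uniform distribution on [0,1] and μₙ = (1/n)∑_{k=1}^n δ_{U_k} is the empirical measure of n i.i.d. uniform samples, then E[W₂(μ, μₙ)²] ≤ 1/(6n) for all n ≥ 1. -/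
/-!
Sort the sample into `v` and couple the uniform law with the empirical one by sending the
block `[k/n, (k+1)/n)` to `v k` (the monotone coupling). Its cost is
`1/3 + (1/n) ∑ v_k² - (1/n²) ∑ (2k+1) v_k`, and for sorted `v` the last sum equals
`∑_{j,k} max v_j v_k`, an expression that no longer depends on the order of the sample.
Taking expectations with `E[U²] = 1/3`, `E[U] = 1/2` and `E[max U U'] = 2/3` for independent
uniforms gives `2/3 - (n/2 + 2n(n-1)/3)/n² = 1/(6n)`.
-/

open MeasureTheory Set
open scoped ENNReal

noncomputable section

def sqWasserstein (μ ν : Measure ℝ) : ℝ≥0∞ :=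
  sInf {c | ∃ ρ : Measure (ℝ × ℝ), ρ.map Prod.fst = μ ∧ ρ.map Prod.snd = ν ∧
    c = ∫⁻ p, ENNReal.ofReal ((p.1 - p.2) ^ 2) ∂ρ}

def empiricalMeasure {n : ℕ} (u : Fin n → ℝ) : Measure ℝ :=
  (n : ℝ≥0∞)⁻¹ • ∑ k, Measure.dirac (u k)

theorem sqWasserstein_le_lintegral {μ ν : Measure ℝ} (ρ : Measure (ℝ × ℝ))
    (hρμ : ρ.map Prod.fst = μ) (hρν : ρ.map Prod.snd = ν) :
    sqWasserstein μ ν ≤ ∫⁻ p, ENNReal.ofReal ((p.1 - p.2) ^ 2) ∂ρ :=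
  sInf_le ⟨ρ, hρμ, hρν, rfl⟩

theorem empiricalMeasure_comp_perm {n : ℕ} (u : Fin n → ℝ) (σ : Equiv.Perm (Fin n)) :
    empiricalMeasure (u ∘ σ) = empiricalMeasure u := by
  simp only [empiricalMeasure, Function.comp_apply, Equiv.sum_comp σ fun k => Measure.dirac (u k)]

def gridInterval (n k : ℕ) : Set ℝ := Ico ((k : ℝ) / n) ((k + 1) / n)

theorem natCast_div_le_add_one_div (n k : ℕ) : (k / n : ℝ) ≤ (k + 1) / n := by
  gcongr
  linarith

theorem volume_gridInterval {n : ℕ} (hn : n ≠ 0) (k : ℕ) :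
    volume (gridInterval n k) = (n : ℝ≥0∞)⁻¹ := by
  rw [gridInterval, Real.volume_Ico, add_div, add_sub_cancel_left, one_div,
    ENNReal.ofReal_inv_of_pos (by positivity), ENNReal.ofReal_natCast]

theorem pairwise_disjoint_gridInterval (n : ℕ) :
    Pairwise (Function.onFun Disjoint (gridInterval n)) := by
  have hmono : Monotone fun k : ℕ => (k : ℝ) / n := fun _ _ h =>
    div_le_div_of_nonneg_right (Nat.cast_le.2 h) n.cast_nonneg
  have := hmono.pairwise_disjoint_on_Ico_succ
  simp only [Order.succ_eq_add_one, Nat.cast_add, Nat.cast_one] at this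
  exact this

theorem iUnion_gridInterval {n : ℕ} (hn : n ≠ 0) :
    ⋃ k : Fin n, gridInterval n k = Ico 0 1 := by
  apply Subset.antisymm
  · refine iUnion_subset fun k => Ico_subset_Ico (by positivity) ?_
    rw [div_le_one (by positivity)]
    exact_mod_cast k.isLt
  · have := Ico_subset_biUnion_Ico n fun k : ℕ => (k : ℝ) / n
    simp only [Nat.cast_zero, zero_div, div_self (Nat.cast_ne_zero.2 hn : (n : ℝ) ≠ 0)] at this
    refine this.trans fun t ht => ?_
    simp only [mem_iUnion, Finset.mem_range] at ht ⊢
    obtain ⟨k, hk, ht⟩ := ht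
    exact ⟨⟨k, hk⟩, by simpa [gridInterval] using ht⟩

theorem lintegral_Ico_ofReal {f : ℝ → ℝ} (hf : Continuous f) (hf₀ : ∀ x, 0 ≤ f x) {a b : ℝ}
    (hab : a ≤ b) :
    ∫⁻ x in Ico a b, ENNReal.ofReal (f x) = ENNReal.ofReal (∫ x in a..b, f x) := by
  rw [← ofReal_integral_eq_lintegral_ofReal (hf.integrableOn_Icc.mono_set Ico_subset_Icc_self)
    (.of_forall hf₀), intervalIntegral.integral_of_le hab, integral_Ico_eq_integral_Ioc]

section GridCoupling

variable {n : ℕ}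

def gridCoupling (v : Fin n → ℝ) : Measure (ℝ × ℝ) :=
  Measure.sum fun k : Fin n => (volume.restrict (gridInterval n k)).map fun t => (t, v k)

theorem gridCoupling_map_fst (hn : n ≠ 0) (v : Fin n → ℝ) :
    (gridCoupling v).map Prod.fst = volume.restrict (Icc 0 1) := by
  rw [gridCoupling, Measure.map_sum measurable_fst.aemeasurable]
  simp_rw [Measure.map_map measurable_fst measurable_prodMk_right]
  rw [← Measure.restrict_congr_set Ico_ae_eq_Icc, ← iUnion_gridInterval hn,
    Measure.restrict_iUnion
      ((pairwise_disjoint_gridInterval n).comp_of_injective Fin.val_injective)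
      fun _ => measurableSet_Ico]
  simp [Function.comp_def]

theorem gridCoupling_map_snd (hn : n ≠ 0) (v : Fin n → ℝ) :
    (gridCoupling v).map Prod.snd = empiricalMeasure v := by
  rw [gridCoupling, Measure.map_sum measurable_snd.aemeasurable]
  simp_rw [Measure.map_map measurable_snd measurable_prodMk_right]
  simp only [Function.comp_def, Measure.map_const, Measure.restrict_apply_univ,
    volume_gridInterval hn, Measure.sum_fintype, empiricalMeasure, Finset.smul_sum]

def gridCost (v : Fin n → ℝ) : ℝ :=
  ∑ k : Fin n, ∫ t in (k / n : ℝ)..((k + 1) / n), (t - v k) ^ 2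

theorem integral_grid_sub_sq_nonneg (k : ℕ) (c : ℝ) :
    0 ≤ ∫ t in (k / n : ℝ)..((k + 1) / n), (t - c) ^ 2 :=
  intervalIntegral.integral_nonneg (natCast_div_le_add_one_div n k) fun _ _ => sq_nonneg _

theorem gridCost_nonneg (v : Fin n → ℝ) : 0 ≤ gridCost v :=
  Finset.sum_nonneg fun k _ => integral_grid_sub_sq_nonneg k (v k)

theorem lintegral_gridCoupling (v : Fin n → ℝ) :
    ∫⁻ p, ENNReal.ofReal ((p.1 - p.2) ^ 2) ∂gridCoupling v = ENNReal.ofReal (gridCost v) := by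
  rw [gridCoupling, lintegral_sum_measure, tsum_fintype, gridCost,
    ENNReal.ofReal_sum_of_nonneg fun (k : Fin n) _ => integral_grid_sub_sq_nonneg k (v k)]
  refine Finset.sum_congr rfl fun k _ => ?_
  rw [lintegral_map (by fun_prop) measurable_prodMk_right]
  exact lintegral_Ico_ofReal (by fun_prop) (fun _ => sq_nonneg _) (natCast_div_le_add_one_div n k)

end GridCoupling

theorem Fin.sum_sum_comp_max {M : Type*} [AddCommMonoid M] {n : ℕ} (f : Fin n → M) :
    ∑ j, ∑ k, f (max j k) = ∑ m : Fin n, (2 * (m : ℕ) + 1) • f m := by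
  induction n with
  | zero => simp
  | succ n ih =>
    have hcast (j k : Fin n) : max j.castSucc k.castSucc = (max j k).castSucc :=
      (Fin.strictMono_castSucc.monotone.map_max).symm
    simp only [Fin.sum_univ_castSucc, hcast, max_eq_right (Fin.castSucc_lt_last _).le,
      max_eq_left (Fin.castSucc_lt_last _).le, max_self, Finset.sum_add_distrib]
    rw [ih fun m => f m.castSucc]
    simp only [Fin.val_castSucc, Fin.val_last, Finset.sum_const, Finset.card_univ,
      Fintype.card_fin]
    rw [add_assoc, add_smul, one_smul, two_mul, add_smul, add_assoc]

theorem Equiv.sum_sum_comp {ι κ M : Type*} [Fintype ι] [Fintype κ] [AddCommMonoid M]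
    (σ : ι ≃ κ) (f : κ → κ → M) :
    ∑ j, ∑ k, f (σ j) (σ k) = ∑ j, ∑ k, f j k :=
  calc ∑ j, ∑ k, f (σ j) (σ k) = ∑ j, ∑ k, f (σ j) k :=
        Finset.sum_congr rfl fun j _ => σ.sum_comp (f (σ j))
    _ = ∑ j, ∑ k, f j k := σ.sum_comp fun j => ∑ k, f j k

theorem integral_sub_sq (a b v : ℝ) :
    ∫ t in a..b, (t - v) ^ 2 = ((b - v) ^ 3 - (a - v) ^ 3) / 3 := by
  rw [intervalIntegral.integral_comp_sub_right (· ^ 2), integral_pow]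
  ring

section QuantileCost

variable {n : ℕ}

theorem gridCost_eq (hn : n ≠ 0) (v : Fin n → ℝ) :
    gridCost v = 1 / 3 + (∑ k, v k ^ 2) / n - (∑ k : Fin n, (2 * k + 1) * v k) / n ^ 2 := by
  have hn' : (n : ℝ) ≠ 0 := Nat.cast_ne_zero.2 hn
  have hterm (k : Fin n) : ∫ t in (k / n : ℝ)..((k + 1) / n), (t - v k) ^ 2
      = ((k + 1 : ℝ) ^ 3 - k ^ 3) / (3 * n ^ 3) + v k ^ 2 / n - (2 * k + 1) * v k / n ^ 2 := by
    rw [integral_sub_sq]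
    field_simp
    ring
  have htelescope : ∑ k : Fin n, ((k + 1 : ℝ) ^ 3 - k ^ 3) = n ^ 3 := by
    have := Finset.sum_range_sub (fun k : ℕ => (k : ℝ) ^ 3) n
    push_cast at this
    rw [Fin.sum_univ_eq_sum_range (fun k : ℕ => ((k + 1 : ℝ) ^ 3 - k ^ 3)), this]
    simp
  simp only [gridCost, hterm, Finset.sum_add_distrib, Finset.sum_sub_distrib, ← Finset.sum_div,
    htelescope]
  field_simp

/-- The cost of the monotone coupling of the uniform law with `empiricalMeasure u`, written
symmetrically in the sample. -/
def quantileCost (u : Fin n → ℝ) : ℝ :=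
  1 / 3 + (∑ k, u k ^ 2) / n - (∑ j, ∑ k, max (u j) (u k)) / n ^ 2

theorem continuous_quantileCost : Continuous (quantileCost (n := n)) := by
  unfold quantileCost
  fun_prop

theorem gridCost_sort (hn : n ≠ 0) (u : Fin n → ℝ) :
    gridCost (u ∘ Tuple.sort u) = quantileCost u := by
  set σ := Tuple.sort u
  have hmax : ∑ j, ∑ k, max (u j) (u k) = ∑ k : Fin n, (2 * k + 1) * (u ∘ σ) k :=
    calc ∑ j, ∑ k, max (u j) (u k) = ∑ j, ∑ k, (u ∘ σ) (max j k) := by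
          rw [← σ.sum_sum_comp]
          exact Finset.sum_congr rfl fun j _ => Finset.sum_congr rfl fun k _ =>
            ((Tuple.monotone_sort u).map_max).symm
      _ = ∑ k : Fin n, (2 * k + 1) * (u ∘ σ) k := by
          simp only [Fin.sum_sum_comp_max, nsmul_eq_mul, Nat.cast_add, Nat.cast_mul,
            Nat.cast_ofNat, Nat.cast_one]
  rw [gridCost_eq hn, quantileCost, hmax, ← Equiv.sum_comp σ fun k => u k ^ 2]
  rfl

theorem quantileCost_nonneg (hn : n ≠ 0) (u : Fin n → ℝ) : 0 ≤ quantileCost u :=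
  gridCost_sort hn u ▸ gridCost_nonneg _

theorem sqWasserstein_empiricalMeasure_le (hn : n ≠ 0) (u : Fin n → ℝ) :
    sqWasserstein (volume.restrict (Icc 0 1)) (empiricalMeasure u)
      ≤ ENNReal.ofReal (quantileCost u) := by
  rw [← gridCost_sort hn, ← lintegral_gridCoupling, ← empiricalMeasure_comp_perm u (Tuple.sort u)]
  exact sqWasserstein_le_lintegral _ (gridCoupling_map_fst hn _) (gridCoupling_map_snd hn _)

end QuantileCost

instance isProbabilityMeasure_restrict_Icc_zero_one :
    IsProbabilityMeasure (volume.restrict (Icc (0 : ℝ) 1)) :=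
  ⟨by simp⟩

theorem MeasureTheory.Measure.pi_restrict_Icc {ι : Type*} [Fintype ι] (a b : ι → ℝ) :
    Measure.pi (fun i => volume.restrict (Icc (a i) (b i))) = volume.restrict (Icc a b) := by
  rw [← Measure.restrict_pi_pi, ← volume_pi, pi_univ_Icc]

theorem MeasureTheory.Measure.pi_map_eval_prod {ι : Type*} [Fintype ι] {Ω : ι → Type*}
    [∀ i, MeasurableSpace (Ω i)] {μ : (i : ι) → Measure (Ω i)} [∀ i, IsProbabilityMeasure (μ i)]
    {i j : ι} (hij : i ≠ j) :
    (Measure.pi μ).map (fun ω => (ω i, ω j)) = (μ i).prod (μ j) := by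
  rw [← Measure.infinitePi_eq_pi]
  exact Measure.infinitePi_map_eval_prod hij

theorem integral_Icc_eq_intervalIntegral {f : ℝ → ℝ} {a b : ℝ} (hab : a ≤ b) :
    ∫ x in Icc a b, f x = ∫ x in a..b, f x := by
  rw [integral_Icc_eq_integral_Ioc, intervalIntegral.integral_of_le hab]

theorem integral_max_Icc_zero_one {x : ℝ} (hx : x ∈ Icc (0 : ℝ) 1) :
    ∫ y in Icc (0 : ℝ) 1, max x y = (1 + x ^ 2) / 2 := by
  have hint (a b : ℝ) : IntervalIntegrable (fun y => max x y) volume a b :=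
    (continuous_const.max continuous_id).intervalIntegrable a b
  rw [integral_Icc_eq_intervalIntegral zero_le_one,
    ← intervalIntegral.integral_add_adjacent_intervals (hint 0 x) (hint x 1),
    intervalIntegral.integral_congr (g := fun _ => x) fun y hy => max_eq_left ?_,
    intervalIntegral.integral_congr (f := fun y => max x y) (g := fun y => y)
      fun y hy => max_eq_right ?_,
    intervalIntegral.integral_const, integral_id]
  · simp only [sub_zero, smul_eq_mul]
    ring
  · rw [uIcc_of_le hx.2] at hy
    exact hy.1
  · rw [uIcc_of_le hx.1] at hy
    exact hy.2

theorem integral_max_prod_Icc_zero_one :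
    ∫ p, max p.1 p.2 ∂(volume.restrict (Icc (0 : ℝ) 1)).prod (volume.restrict (Icc (0 : ℝ) 1))
      = 2 / 3 := by
  have hint : Integrable (fun p : ℝ × ℝ => max p.1 p.2)
      ((volume.restrict (Icc (0 : ℝ) 1)).prod (volume.restrict (Icc (0 : ℝ) 1))) := by
    rw [Measure.prod_restrict, ← Measure.volume_eq_prod, Icc_prod_Icc]
    exact (continuous_fst.max continuous_snd).integrableOn_Icc
  rw [integral_prod _ hint, setIntegral_congr_fun measurableSet_Icc
    fun x hx => integral_max_Icc_zero_one hx, integral_Icc_eq_intervalIntegral zero_le_one,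
    intervalIntegral.integral_div, intervalIntegral.integral_add, integral_pow]
  · norm_num
  · exact intervalIntegrable_const
  · exact (continuous_pow 2).intervalIntegrable _ _

section UniformSample

variable {n : ℕ}

theorem integrable_pi_Icc_zero_one {f : (Fin n → ℝ) → ℝ} (hf : Continuous f) :
    Integrable f (Measure.pi fun _ => volume.restrict (Icc (0 : ℝ) 1)) := by
  rw [Measure.pi_restrict_Icc (fun _ => 0) (fun _ => 1)]
  exact hf.integrableOn_Icc

theorem integral_pi_sq_eval (k : Fin n) :
    ∫ u, u k ^ 2 ∂Measure.pi (fun _ => volume.restrict (Icc (0 : ℝ) 1)) = 1 / 3 := by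
  rw [integral_comp_eval (f := fun x => x ^ 2) (by fun_prop),
    integral_Icc_eq_intervalIntegral zero_le_one, integral_pow]
  norm_num

theorem integral_pi_max_eval_eval (j k : Fin n) :
    ∫ u, max (u j) (u k) ∂Measure.pi (fun _ => volume.restrict (Icc (0 : ℝ) 1))
      = 2 / 3 - if j = k then 1 / 6 else 0 := by
  rcases eq_or_ne j k with rfl | hjk
  · rw [if_pos rfl]
    simp_rw [max_self]
    rw [integral_eval, integral_Icc_eq_intervalIntegral zero_le_one, integral_id]
    norm_num
  · rw [if_neg hjk, ← integral_map (φ := fun u : Fin n → ℝ => (u j, u k)) (by fun_prop)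
      (f := fun p : ℝ × ℝ => max p.1 p.2) (by fun_prop),
      Measure.pi_map_eval_prod hjk, integral_max_prod_Icc_zero_one, sub_zero]

theorem integral_quantileCost (hn : n ≠ 0) :
    ∫ u : Fin n → ℝ, quantileCost u ∂Measure.pi (fun _ => volume.restrict (Icc (0 : ℝ) 1))
      = 1 / (6 * n) := by
  have hint {f : (Fin n → ℝ) → ℝ} (hf : Continuous f) := integrable_pi_Icc_zero_one hf
  have hrow (j : Fin n) :
      ∫ u : Fin n → ℝ, ∑ k, max (u j) (u k) ∂Measure.pi (fun _ => volume.restrict (Icc (0 : ℝ) 1))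
        = ∑ k, (2 / 3 - if j = k then 1 / 6 else 0 : ℝ) := by
    rw [integral_finsetSum _ fun k _ => hint (by fun_prop)]
    simp_rw [integral_pi_max_eval_eval]
  simp only [quantileCost]
  rw [integral_sub (hint (by fun_prop)) (hint (by fun_prop)),
    integral_add (integrable_const _) (hint (by fun_prop)), integral_const, integral_div,
    integral_div, integral_finsetSum _ fun k _ => hint (by fun_prop),
    integral_finsetSum _ fun j _ => hint (by fun_prop)]
  simp_rw [hrow, integral_pi_sq_eval]
  simp only [probReal_univ, smul_eq_mul, one_mul, Finset.sum_const, Finset.card_univ,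
    Fintype.card_fin, nsmul_eq_mul, Finset.sum_sub_distrib, Finset.sum_ite_eq, Finset.mem_univ,
    if_true]
  field_simp
  ring

end UniformSample

end

/-- Bobkov–Ledoux bound: if `μ` is uniform on `[0,1]` and `μₙ` is the empirical measure
of `n` i.i.d. uniform samples, then `E[W₂(μ, μₙ)²] ≤ 1/(6n)`, where
`W₂²` is the infimal squared-distance transport cost over couplings. -/
theorem empirical_wasserstein2_uniform_bound (n : ℕ) (hn : 1 ≤ n) :
    ∫⁻ u : Fin n → ℝ,
        sInf {c : ℝ≥0∞ | ∃ ρ : Measure (ℝ × ℝ),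
            ρ.map Prod.fst = volume.restrict (Set.Icc (0 : ℝ) 1) ∧
            ρ.map Prod.snd = (n : ℝ≥0∞)⁻¹ • ∑ k : Fin n, Measure.dirac (u k) ∧
            c = ∫⁻ p, ENNReal.ofReal ((p.1 - p.2) ^ 2) ∂ρ}
        ∂(Measure.pi fun _ : Fin n => volume.restrict (Set.Icc (0 : ℝ) 1))
      ≤ ENNReal.ofReal (1 / (6 * n)) := by
  have hn₀ : n ≠ 0 := Nat.one_le_iff_ne_zero.1 hn
  change ∫⁻ u, sqWasserstein (volume.restrict (Icc 0 1)) (empiricalMeasure u) ∂_ ≤ _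
  calc _ ≤ ∫⁻ u, ENNReal.ofReal (quantileCost u)
          ∂(Measure.pi fun _ : Fin n => volume.restrict (Set.Icc (0 : ℝ) 1)) :=
        lintegral_mono fun u => sqWasserstein_empiricalMeasure_le hn₀ u
    _ = ENNReal.ofReal (∫ u, quantileCost u
          ∂(Measure.pi fun _ : Fin n => volume.restrict (Set.Icc (0 : ℝ) 1))) :=
        (ofReal_integral_eq_lintegral_ofReal (integrable_pi_Icc_zero_one continuous_quantileCost)
          (.of_forall (quantileCost_nonneg hn₀))).symm
    _ = ENNReal.ofReal (1 / (6 * n)) := by rw [integral_quantileCost hn₀]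
end
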